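/- arXiv:1407.2397 — 2 statements merged into one kernel-verified Lean document; each statement's English description precedes it below -/
import Mathlib

section
/- Let q be an odd prime power and A = {(a₁,…,a_d, a₁²+⋯+a_d²) : aᵢ ∈ F_q} ⊆ F_q^{d+1}. For any finite set C ⊆ F_q^{d+1}, ∑_{x ∈ F_q^{d+1}} (r_{A+C}(x) − |C|/q)² ≤ |C| q^{d-1}(q−1), where r_{A+C}(x) = |{(a,c) ∈ A×C : a+c = x}|. -/
/-!
Write `r x` for the number of representations `x = a + c` with `a ∈ A`, `c ∈ C`. Its mean over
`F^(d+1)` is `|A||C| / q^(d+1) = |C| / q`, so the left-hand side is the additive energy `E(A, C)`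
minus `|C|² q^d / q`. In `E(A, C) = ∑_{c, c' ∈ C} |A ∩ (A + c - c')|` the `|C|` diagonal terms
are `q^d`, while for `v ≠ 0` the points of `A ∩ (A - v)` project injectively onto the solutions
of the affine equation `2 v' · b = v_last - v' · v'` (where `v'` drops the last coordinate), which
is not `0 = 0` because `2 ≠ 0` in `F`; hence there are at most `q^d / q` of them.
-/

open Finset
open scoped Combinatorics.Additive

lemma AddMonoidHom.card_fiber_mul_card_eq {G H Φ : Type*} [AddGroup G] [Fintype G] [AddMonoid H]
    [Fintype H] [DecidableEq H] [FunLike Φ G H] [AddMonoidHomClass Φ G H] (f : Φ)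
    (hf : Function.Surjective f) (c : H) :
    #{g | f g = c} * Fintype.card H = Fintype.card G := by
  calc #{g | f g = c} * Fintype.card H
      = ∑ h : H, #{g | f g = h} := by
        rw [sum_congr rfl fun h _ ↦ card_fiber_eq_of_mem_range f (hf h) (hf c), sum_const,
          card_univ, smul_eq_mul, mul_comm]
    _ = Fintype.card G := (card_eq_sum_card_fiberwise fun g _ ↦ mem_univ (f g)).symm

lemma card_filter_dotProduct_eq_mul_card_le {ι F : Type*} [Fintype ι] [DecidableEq ι] [Field F]
    [Fintype F] [DecidableEq F] {w : ι → F} {c : F} (h : w ≠ 0 ∨ c ≠ 0) :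
    #{b | w ⬝ᵥ b = c} * Fintype.card F ≤ Fintype.card (ι → F) := by
  obtain rfl | hw := eq_or_ne w 0
  · simp [eq_comm, h.resolve_left fun h ↦ h rfl]
  · have hf : dotProductEquiv F ι w ≠ 0 := (LinearEquiv.map_ne_zero_iff _).mpr hw
    simpa using (AddMonoidHom.card_fiber_mul_card_eq _ (LinearMap.surjective hf) c).le

section Energy

variable {G : Type*} [AddCommGroup G] [DecidableEq G]

lemma card_filter_add_eq_add (s : Finset G) (c₁ c₂ : G) :
    #{a ∈ s ×ˢ s | a.1 + c₁ = a.2 + c₂} = #{a ∈ s | a + (c₂ - c₁) ∈ s} := by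
  have key (a b : G) : a + c₁ = b + c₂ ↔ b + (c₂ - c₁) = a := by
    rw [← add_sub_assoc, sub_eq_iff_eq_add, eq_comm]
  refine card_nbij' Prod.snd (fun a ↦ (a + (c₂ - c₁), a)) ?_ ?_ ?_ ?_
  · rintro ⟨a, b⟩ hab
    simp only [coe_filter, mem_product, Set.mem_ofPred_eq, key] at hab ⊢
    obtain ⟨⟨ha, hb⟩, rfl⟩ := hab
    exact ⟨hb, ha⟩
  · intro a ha
    simp only [coe_filter, mem_product, Set.mem_ofPred_eq, key, and_true] at ha ⊢
    exact ⟨ha.2, ha.1⟩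
  · rintro ⟨a, b⟩ hab
    simp only [coe_filter, mem_product, Set.mem_ofPred_eq, key] at hab
    simp [hab.2]
  · intro a _
    rfl

lemma addEnergy_eq_sum_card_filter_add_mem (s t : Finset G) :
    E[s, t] = ∑ c ∈ t ×ˢ t, #{a ∈ s | a + (c.2 - c.1) ∈ s} := by
  rw [addEnergy, card_filter, sum_product_right]
  refine sum_congr rfl fun c _ ↦ ?_
  rw [← card_filter_add_eq_add, card_filter]

lemma addEnergy_le_of_card_filter_add_mem_le (s t : Finset G) {M : ℝ}
    (hM : ∀ v ≠ 0, (#{a ∈ s | a + v ∈ s} : ℝ) ≤ M) :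
    (E[s, t] : ℝ) ≤ #t * #s + (#t ^ 2 - #t) * M := by
  have hdiag : ∑ c ∈ t.diag, (#{a ∈ s | a + (c.2 - c.1) ∈ s} : ℝ) = #t * #s := by
    rw [sum_congr rfl fun c hc ↦ by rw [(mem_diag.mp hc).2, sub_self]]
    simp [diag_card]
  have hcard : (#t.offDiag : ℝ) = #t ^ 2 - #t := by
    have h := card_union_of_disjoint (disjoint_diag_offDiag t)
    rw [diag_union_offDiag, card_product, diag_card] at h
    have h' : (#t * #t : ℝ) = #t + #t.offDiag := by exact_mod_cast h
    linarith
  have hoffDiag : ∑ c ∈ t.offDiag, (#{a ∈ s | a + (c.2 - c.1) ∈ s} : ℝ) ≤ (#t ^ 2 - #t) * M := by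
    rw [← hcard, ← nsmul_eq_mul]
    exact sum_le_card_nsmul _ _ _ fun c hc ↦ hM _ (sub_ne_zero.mpr (mem_offDiag.mp hc).2.2.symm)
  rw [addEnergy_eq_sum_card_filter_add_mem, ← diag_union_offDiag, Nat.cast_sum,
    sum_union (disjoint_diag_offDiag t), hdiag]
  linarith

lemma sum_sq_sub_card_filter_add_eq [Fintype G] (s t : Finset G) :
    ∑ x, ((#{p ∈ s ×ˢ t | p.1 + p.2 = x} : ℝ) - #s * #t / Fintype.card G) ^ 2 =
      E[s, t] - (#s * #t : ℝ) ^ 2 / Fintype.card G := by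
  have hsum : ∑ x, (#{p ∈ s ×ˢ t | p.1 + p.2 = x} : ℝ) = #s * #t := by
    rw [← Nat.cast_sum, ← card_eq_sum_card_fiberwise fun p _ ↦ mem_univ (p.1 + p.2),
      card_product, Nat.cast_mul]
  have hsumsq : ∑ x, (#{p ∈ s ×ˢ t | p.1 + p.2 = x} : ℝ) ^ 2 = E[s, t] := by
    rw [addEnergy_eq_sum_sq]; push_cast; rfl
  have hG : (Fintype.card G : ℝ) ≠ 0 := by positivity
  simp only [sub_sq, sum_add_distrib, sum_sub_distrib, ← sum_mul, ← mul_sum, hsum, hsumsq,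
    sum_const, card_univ, nsmul_eq_mul]
  field_simp
  ring

end Energy

section Paraboloid

variable (F : Type*) [Field F] [Fintype F] [DecidableEq F] (d : ℕ)

def paraboloid : Finset (Fin (d + 1) → F) :=
  univ.image fun a : Fin d → F ↦ Fin.snoc a (∑ i, a i ^ 2)

variable {F d}

lemma mem_paraboloid {x : Fin (d + 1) → F} :
    x ∈ paraboloid F d ↔ x (Fin.last d) = Fin.init x ⬝ᵥ Fin.init x := by
  simp only [paraboloid, mem_image, mem_univ, true_and, dotProduct, ← sq]
  constructor
  · rintro ⟨a, rfl⟩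
    simp
  · intro h
    exact ⟨Fin.init x, by rw [← h, Fin.snoc_init_self]⟩

lemma card_paraboloid : #(paraboloid F d) = Fintype.card F ^ d := by
  rw [paraboloid, card_image_of_injective _ fun a b h ↦ by simpa using congr_arg Fin.init h,
    card_univ, Fintype.card_fun, Fintype.card_fin]

lemma injOn_init_paraboloid : Set.InjOn Fin.init (paraboloid F d : Set (Fin (d + 1) → F)) := by
  intro a ha b hb hab
  rw [← Fin.snoc_init_self a, ← Fin.snoc_init_self b, mem_paraboloid.mp ha, mem_paraboloid.mp hb,
    hab]

lemma card_filter_add_mem_paraboloid_mul_card_le (hF : ringChar F ≠ 2)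
    {v : Fin (d + 1) → F} (hv : v ≠ 0) :
    #{a ∈ paraboloid F d | a + v ∈ paraboloid F d} * Fintype.card F ≤ Fintype.card F ^ d := by
  set w := (2 : F) • Fin.init v
  set c := v (Fin.last d) - Fin.init v ⬝ᵥ Fin.init v
  -- the paraboloid equations of `a` and `a + v` differ by an affine equation in `Fin.init a`
  have haffine (a) (ha : a ∈ paraboloid F d) (hav : a + v ∈ paraboloid F d) :
      w ⬝ᵥ Fin.init a = c := by
    have hinit : Fin.init (a + v) = Fin.init a + Fin.init v := rfl
    rw [mem_paraboloid] at ha hav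
    rw [hinit, Pi.add_apply, add_dotProduct, dotProduct_add, dotProduct_add] at hav
    rw [smul_dotProduct, smul_eq_mul]
    linear_combination ha - hav - dotProduct_comm (Fin.init a) (Fin.init v)
  have hwc : w ≠ 0 ∨ c ≠ 0 := by
    by_contra! h
    have hv' : Fin.init v = 0 := (smul_eq_zero.mp h.1).resolve_left (Ring.two_ne_zero hF)
    have hl : v (Fin.last d) = 0 := by simpa [c, hv'] using h.2
    exact hv (funext fun i ↦ Fin.lastCases hl (fun j ↦ congr_fun hv' j) i)
  calc _ ≤ #{b | w ⬝ᵥ b = c} * Fintype.card F := by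
        gcongr
        refine card_le_card_of_injOn _ (fun a ha ↦ ?_) (injOn_init_paraboloid.mono ?_)
        · have ha := mem_filter.mp ha
          exact mem_filter.mpr ⟨mem_univ _, haffine a ha.1 ha.2⟩
        · exact coe_subset.mpr (filter_subset _ _)
    _ ≤ _ := by simpa using card_filter_dotProduct_eq_mul_card_le hwc

end Paraboloid

theorem paraboloid_energy_bound_general {F : Type*} [Field F] [Fintype F] [DecidableEq F]
    {q d : ℕ} (hq : Fintype.card F = q) (hchar : ringChar F ≠ 2)
    (A : Finset (Fin (d + 1) → F))
    (hA : A = Finset.image (fun a : Fin d → F => Fin.snoc a (∑ i, a i ^ 2)) Finset.univ)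
    (C : Finset (Fin (d + 1) → F)) :
    ∑ x : Fin (d + 1) → F,
        ((((A ×ˢ C).filter (fun p => p.1 + p.2 = x)).card : ℝ) - (C.card : ℝ) / q) ^ 2 ≤
      (C.card : ℝ) * (q : ℝ) ^ (d - 1) * ((q : ℝ) - 1) := by
  change A = paraboloid F d at hA
  have hq1 : (1 : ℝ) ≤ q := by exact_mod_cast hq ▸ Fintype.card_pos
  have hcardA : (#A : ℝ) = q ^ d := by rw [hA, card_paraboloid, hq, Nat.cast_pow]
  have hcardG : (Fintype.card (Fin (d + 1) → F) : ℝ) = q ^ (d + 1) := by simp [hq]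
  have hoff (v : Fin (d + 1) → F) (hv : v ≠ 0) :
      (#{a ∈ A | a + v ∈ A} : ℝ) ≤ q ^ d / q := by
    rw [le_div_iff₀ (by positivity), hA]
    exact_mod_cast hq ▸ card_filter_add_mem_paraboloid_mul_card_le hchar hv
  have hE := addEnergy_le_of_card_filter_add_mem_le A C hoff
  have hmean : (#C : ℝ) / q = #A * #C / Fintype.card (Fin (d + 1) → F) := by
    rw [hcardA, hcardG]
    field_simp
    ring
  rw [hmean, sum_sq_sub_card_filter_add_eq, hcardA, hcardG]
  calc _ ≤ (#C : ℝ) * (q ^ d / q) * (q - 1) := by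
        have hsq : ((q : ℝ) ^ d * #C) ^ 2 / q ^ (d + 1) = #C ^ 2 * (q ^ d / q) := by
          field_simp
          ring
        have hlin : (#C : ℝ) * q ^ d = #C * (q ^ d / q) * q := by field_simp
        rw [hcardA] at hE
        rw [hsq]
        linarith
    _ ≤ _ := by
        gcongr
        rw [div_le_iff₀ (by positivity), ← pow_succ]
        exact pow_le_pow_right₀ hq1 (by omega)

theorem paraboloid_energy_bound {F : Type*} [Field F] [Fintype F] [DecidableEq F]
    {q d : ℕ} (hq : Fintype.card F = q) (hchar : ringChar F ≠ 2) (hd : 1 ≤ d)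
    (A : Finset (Fin (d + 1) → F))
    (hA : A = Finset.image (fun a : Fin d → F => Fin.snoc a (∑ i, a i ^ 2)) Finset.univ)
    (C : Finset (Fin (d + 1) → F)) :
    ∑ x : Fin (d + 1) → F,
        ((((A ×ˢ C).filter (fun p => p.1 + p.2 = x)).card : ℝ) - (C.card : ℝ) / q) ^ 2 ≤
      (C.card : ℝ) * (q : ℝ) ^ (d - 1) * ((q : ℝ) - 1) :=
  paraboloid_energy_bound_general hq hchar A hA C
end

section
/- Let q be an odd prime power and P ⊆ F_q^d with |P| > 2(1/2)^{1/2} q^{(d+1)/2} · 2 (i.e., |P| ≥ 2√2 · q^{(d+1)/2} suffices, taking ε = 1/2 in the pinned distance bound). Then there exists a point p ∈ P with |Δ_p(P)| > q/2; in particular the distance set Δ(P) = {‖x−y‖ : x,y ∈ P} has size greater than q/2. -/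
/-!
If every pinned distance set `Δ_p(P)`, `p ∈ P`, had at most `t` elements, Cauchy–Schwarz would
force at least `|P|³ / t` triples `(x, y, p) ∈ P³` with `‖x - p‖ = ‖y - p‖`. Counting these triples
with additive characters of `F_q`, the trivial character contributes `|P|³ / q`; for a nontrivial
one, extend the sum over `p` to all of `F_q^d`: there `‖x - p‖ - ‖y - p‖` is affine in `p` with
linear part `2 (y - x)`, nonzero for `x ≠ y` as `q` is odd, so orthogonality leaves only the
diagonal, and all nontrivial characters together contribute at most `q^d |P|`. Hence
`(q - t) |P|² ≤ t q^(d+1)`, which fails for `t = q / 2` as soon as `|P|² > q^(d+1)`.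
-/

open Finset

section Collisions

variable {α β : Type*} [DecidableEq β]

def collisions (P : Finset α) (f : α → β) : Finset (α × α) := {xy ∈ P ×ˢ P | f xy.1 = f xy.2}

theorem card_collisions_eq_sum_sq (P : Finset α) (f : α → β) :
    #(collisions P f) = ∑ t ∈ P.image f, #{a ∈ P | f a = t} ^ 2 := by
  rw [card_eq_sum_card_fiberwise (f := fun xy => f xy.1) (t := P.image f)]
  · refine sum_congr rfl fun t _ => ?_
    rw [sq, ← card_product]
    congr 1
    ext ⟨x, y⟩
    simp only [collisions, mem_filter, mem_product]
    grind
  · exact fun xy hxy => mem_image_of_mem f (mem_product.1 (mem_filter.1 hxy).1).1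

theorem sq_card_le_card_image_mul_card_collisions (P : Finset α) (f : α → β) :
    #P ^ 2 ≤ #(P.image f) * #(collisions P f) := by
  rw [card_eq_sum_card_image f P, card_collisions_eq_sum_sq]
  exact sq_sum_le_card_mul_sum_sq

end Collisions

theorem AddChar.map_sum_eq_prod {A M ι : Type*} [AddCommMonoid A] [CommMonoid M] (ψ : AddChar A M)
    (s : Finset ι) (f : ι → A) : ψ (∑ i ∈ s, f i) = ∏ i ∈ s, ψ (f i) := by
  classical
  induction s using Finset.induction with
  | empty => simp
  | insert _ _ h ih => rw [sum_insert h, prod_insert h, map_add_eq_mul, ih]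

theorem AddChar.sq_norm_sum_apply {G ι : Type*} [AddCommGroup G] [Finite G] (ψ : AddChar G ℂ)
    (P : Finset ι) (g : ι → G) :
    ((‖∑ x ∈ P, ψ (g x)‖ ^ 2 : ℝ) : ℂ) = ∑ x ∈ P, ∑ y ∈ P, ψ (g x - g y) := by
  rw [Complex.ofReal_pow, ← Complex.mul_conj', map_sum, sum_mul_sum]
  refine sum_congr rfl fun x _ => sum_congr rfl fun y _ => ?_
  rw [← map_neg_eq_conj, ← map_add_eq_mul, sub_eq_add_neg]

section PrimitiveCharacter

variable {R : Type*} [CommRing R] [Fintype R] [DecidableEq R]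

theorem card_mul_card_collisions_eq_sum_sq_norm {α : Type*} {ψ : AddChar R ℂ}
    (hψ : ψ.IsPrimitive) (P : Finset α) (f : α → R) :
    (Fintype.card R : ℝ) * #(collisions P f) = ∑ s, ‖∑ x ∈ P, ψ (s * f x)‖ ^ 2 := by
  apply Complex.ofReal_injective
  simp only [Complex.ofReal_mul, Complex.ofReal_sum, Complex.ofReal_natCast,
    AddChar.sq_norm_sum_apply, ← mul_sub]
  rw [sum_comm]
  simp_rw [sum_comm (s := (univ : Finset R)), AddChar.sum_mulShift _ hψ, sub_eq_zero]
  rw [collisions, card_filter, sum_product, Nat.cast_sum, mul_sum]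
  refine sum_congr rfl fun x _ => ?_
  rw [Nat.cast_sum, mul_sum]
  refine sum_congr rfl fun y _ => ?_
  split_ifs <;> simp

theorem AddChar.sum_apply_dotProduct {R' ι : Type*} [CommRing R'] [IsDomain R'] [Fintype ι]
    [DecidableEq ι] {ψ : AddChar R R'} (hψ : ψ.IsPrimitive) (v : ι → R) :
    ∑ p : ι → R, ψ (v ⬝ᵥ p) = if v = 0 then (Fintype.card R : R') ^ Fintype.card ι else 0 := by
  calc ∑ p : ι → R, ψ (v ⬝ᵥ p) = ∑ p : ι → R, ∏ i, ψ (p i * v i) := by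
        simp only [dotProduct, map_sum_eq_prod, mul_comm]
    _ = ∏ i, ∑ u : R, ψ (u * v i) := (Fintype.prod_sum fun i u => ψ (u * v i)).symm
    _ = ∏ i, if v i = 0 then (Fintype.card R : R') else 0 := by
        simp only [sum_mulShift _ hψ, apply_ite (Nat.cast : ℕ → R'), Nat.cast_zero]
    _ = _ := by
        split_ifs with hv
        · simp [hv]
        · obtain ⟨i, hi⟩ := Function.ne_iff.1 hv
          exact prod_eq_zero (mem_univ i) (if_neg hi)

end PrimitiveCharacter

section SquaredDistance

variable {ι : Type*} [Fintype ι]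

def sqDist {R : Type*} [CommRing R] (x y : ι → R) : R := ∑ i, (x i - y i) ^ 2

theorem sqDist_sub_sqDist {R : Type*} [CommRing R] (x y p : ι → R) :
    sqDist x p - sqDist y p = x ⬝ᵥ x - y ⬝ᵥ y + (2 : R) • (y - x) ⬝ᵥ p := by
  simp only [sqDist, dotProduct, ← sum_sub_distrib, smul_eq_mul, Pi.smul_apply, Pi.sub_apply,
    ← sum_add_distrib]
  exact sum_congr rfl fun i _ => by ring

def pinnedDistances {R : Type*} [CommRing R] [DecidableEq R] (P : Finset (ι → R)) (p : ι → R) :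
    Finset R :=
  P.image (sqDist · p)

def distances {R : Type*} [CommRing R] [DecidableEq R] (P : Finset (ι → R)) : Finset R :=
  (P ×ˢ P).image fun xy => sqDist xy.1 xy.2

theorem pinnedDistances_subset_distances {R : Type*} [CommRing R] [DecidableEq R]
    {P : Finset (ι → R)} {p : ι → R} (hp : p ∈ P) : pinnedDistances P p ⊆ distances P :=
  image_subset_iff.2 fun _ hx => mem_image_of_mem _ (mk_mem_product hx hp)

variable [DecidableEq ι] {F : Type*} [Field F] [Fintype F] [DecidableEq F]

theorem AddChar.sum_apply_mul_sqDist_sub_sqDist (hF : ringChar F ≠ 2) {ψ : AddChar F ℂ}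
    (hψ : ψ.IsPrimitive) {s : F} (hs : s ≠ 0) (x y : ι → F) :
    ∑ p, ψ (s * (sqDist x p - sqDist y p))
      = if x = y then (Fintype.card F : ℂ) ^ Fintype.card ι else 0 := by
  simp_rw [sqDist_sub_sqDist, mul_add, map_add_eq_mul, ← smul_eq_mul (a := s), ← smul_dotProduct,
    ← mul_sum, sum_apply_dotProduct hψ, smul_eq_zero, Ring.two_ne_zero hF, hs, sub_eq_zero,
    false_or, eq_comm (a := y)]
  split_ifs with h
  · simp [h]
  · rw [mul_zero]

theorem sum_sq_norm_sum_addChar_mul_sqDist (hF : ringChar F ≠ 2) {ψ : AddChar F ℂ}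
    (hψ : ψ.IsPrimitive) {s : F} (hs : s ≠ 0) (P : Finset (ι → F)) :
    ∑ p, ‖∑ x ∈ P, ψ (s * sqDist x p)‖ ^ 2 = (Fintype.card F : ℝ) ^ Fintype.card ι * #P := by
  apply Complex.ofReal_injective
  simp only [Complex.ofReal_sum, AddChar.sq_norm_sum_apply, ← mul_sub]
  rw [sum_comm]
  simp_rw [sum_comm (s := (univ : Finset (ι → F))),
    AddChar.sum_apply_mul_sqDist_sub_sqDist hF hψ hs, sum_ite_eq]
  rw [sum_ite_mem, inter_self, sum_const, nsmul_eq_mul, mul_comm]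
  push_cast
  ring

end SquaredDistance

section PinnedDistances

variable {ι : Type*} [Fintype ι] [DecidableEq ι] {F : Type*} [Field F] [Fintype F] [DecidableEq F]

theorem card_mul_sum_card_collisions_sqDist_le (hF : ringChar F ≠ 2) (P : Finset (ι → F)) :
    (Fintype.card F : ℝ) * ∑ p ∈ P, (#(collisions P (sqDist · p)) : ℝ)
      ≤ #P ^ 3 + (Fintype.card F : ℝ) ^ (Fintype.card ι + 1) * #P := by
  set q : ℝ := (Fintype.card F : ℝ)
  set ψ := AddChar.FiniteField.primitiveChar_to_Complex F
  have hψ : ψ.IsPrimitive := AddChar.FiniteField.primitiveChar_to_Complex_isPrimitive F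
  have hzero : ∑ p ∈ P, ‖∑ x ∈ P, ψ (0 * sqDist x p)‖ ^ 2 = #P ^ 3 := by
    simp [sum_const, pow_succ, mul_comm]
  have hnonzero : ∑ s ∈ univ.erase 0, ∑ p ∈ P, ‖∑ x ∈ P, ψ (s * sqDist x p)‖ ^ 2
      ≤ q ^ (Fintype.card ι + 1) * #P :=
    calc _ ≤ ∑ s ∈ univ.erase (0 : F), q ^ Fintype.card ι * #P := by
          refine sum_le_sum fun s hs => ?_
          rw [← sum_sq_norm_sum_addChar_mul_sqDist hF hψ (ne_of_mem_erase hs)]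
          exact sum_le_sum_of_subset_of_nonneg (subset_univ P) fun _ _ _ => by positivity
      _ ≤ ∑ s : F, q ^ Fintype.card ι * #P :=
          sum_le_sum_of_subset_of_nonneg (erase_subset _ _) fun _ _ _ => by positivity
      _ = q ^ (Fintype.card ι + 1) * #P := by
          rw [sum_const, card_univ, nsmul_eq_mul]; ring
  calc q * ∑ p ∈ P, (#(collisions P (sqDist · p)) : ℝ)
      = ∑ s, ∑ p ∈ P, ‖∑ x ∈ P, ψ (s * sqDist x p)‖ ^ 2 := by
        simp_rw [q, mul_sum, card_mul_card_collisions_eq_sum_sq_norm hψ]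
        exact sum_comm
    _ = ∑ p ∈ P, ‖∑ x ∈ P, ψ (0 * sqDist x p)‖ ^ 2
        + ∑ s ∈ univ.erase 0, ∑ p ∈ P, ‖∑ x ∈ P, ψ (s * sqDist x p)‖ ^ 2 :=
        (add_sum_erase _ _ (mem_univ 0)).symm
    _ ≤ #P ^ 3 + q ^ (Fintype.card ι + 1) * #P := by rw [hzero]; gcongr

theorem exists_lt_card_pinnedDistances (hF : ringChar F ≠ 2) (P : Finset (ι → F)) {t : ℝ}
    (ht : 0 ≤ t)
    (hP : t * (Fintype.card F : ℝ) ^ (Fintype.card ι + 1) < (Fintype.card F - t) * #P ^ 2) :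
    ∃ p ∈ P, t < #(pinnedDistances P p) := by
  by_contra! hsmall
  have hbound := card_mul_sum_card_collisions_sqDist_le hF P
  set q : ℝ := (Fintype.card F : ℝ)
  have hcs : (#P : ℝ) ^ 3 ≤ t * ∑ p ∈ P, (#(collisions P (sqDist · p)) : ℝ) :=
    calc (#P : ℝ) ^ 3 = ∑ p ∈ P, (#P : ℝ) ^ 2 := by rw [sum_const, nsmul_eq_mul]; ring
      _ ≤ ∑ p ∈ P, t * #(collisions P (sqDist · p)) := by
          refine sum_le_sum fun p hp => ?_
          calc (#P : ℝ) ^ 2 ≤ #(pinnedDistances P p) * #(collisions P (sqDist · p)) := by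
                exact_mod_cast sq_card_le_card_image_mul_card_collisions P (sqDist · p)
            _ ≤ t * #(collisions P (sqDist · p)) := by gcongr; exact hsmall p hp
      _ = t * ∑ p ∈ P, (#(collisions P (sqDist · p)) : ℝ) := (mul_sum ..).symm
  have hq : 0 ≤ q := by positivity
  have hPpos : (0 : ℝ) < #P := by
    refine lt_of_le_of_ne (by positivity) fun h => ?_
    rw [← h] at hP
    have : t * q ^ (Fintype.card ι + 1) < 0 := by simpa using hP
    exact this.not_ge (by positivity)
  have : (#P : ℝ) * ((q - t) * #P ^ 2 - t * q ^ (Fintype.card ι + 1)) ≤ 0 := by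
    nlinarith [mul_le_mul_of_nonneg_left hbound ht, mul_le_mul_of_nonneg_left hcs hq]
  exact this.not_gt (mul_pos hPpos (sub_pos.2 hP))

end PinnedDistances

theorem large_distance_set_general {F : Type*} [Field F] [Fintype F] [DecidableEq F]
    {q d : ℕ} (hq : Fintype.card F = q) (hchar : ringChar F ≠ 2)
    (P : Finset (Fin d → F))
    (hP : (P.card : ℝ) ≥ 2 * Real.sqrt 2 * Real.sqrt ((q : ℝ) ^ (d + 1))) :
    (∃ p ∈ P, ((P.image (fun x => ∑ i, (x i - p i) ^ 2)).card : ℝ) > (q : ℝ) / 2) ∧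
      ((((P ×ˢ P).image (fun xy => ∑ i, (xy.1 i - xy.2 i) ^ 2)).card : ℝ) > (q : ℝ) / 2) := by
  have hq_pos : (0 : ℝ) < q := by rw [← hq]; exact_mod_cast Fintype.card_pos
  have hpow_pos : (0 : ℝ) < (q : ℝ) ^ (d + 1) := by positivity
  have hsq : (q : ℝ) ^ (d + 1) < #P ^ 2 := by
    have h8 : (2 * √2 * √((q : ℝ) ^ (d + 1))) ^ 2 = 8 * (q : ℝ) ^ (d + 1) := by
      rw [mul_pow, mul_pow, Real.sq_sqrt zero_le_two, Real.sq_sqrt hpow_pos.le]; ring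
    nlinarith [pow_le_pow_left₀ (by positivity) hP 2]
  obtain ⟨p, hp, hgt⟩ := exists_lt_card_pinnedDistances hchar P (t := q / 2) (by positivity)
    (by rw [Fintype.card_fin, hq]; nlinarith)
  exact ⟨⟨p, hp, hgt⟩, hgt.trans_le (mod_cast card_le_card (pinnedDistances_subset_distances hp))⟩

theorem large_distance_set {F : Type*} [Field F] [Fintype F] [DecidableEq F]
    {q d : ℕ} (hq : Fintype.card F = q) (hchar : ringChar F ≠ 2) (hd : 1 ≤ d)
    (P : Finset (Fin d → F))
    (hP : (P.card : ℝ) ≥ 2 * Real.sqrt 2 * Real.sqrt ((q : ℝ) ^ (d + 1))) :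
    (∃ p ∈ P, ((P.image (fun x => ∑ i, (x i - p i) ^ 2)).card : ℝ) > (q : ℝ) / 2) ∧
      ((((P ×ˢ P).image (fun xy => ∑ i, (xy.1 i - xy.2 i) ^ 2)).card : ℝ) > (q : ℝ) / 2) :=
  large_distance_set_general hq hchar P hP
end
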